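/- arXiv:2111.05504 — 7 statements merged into one kernel-verified Lean document; each statement's English description precedes it below -/
import Mathlib

section
/- Let θ > 0, 0 < q < ∞ and K > 0. Let σ = (σ_s)_{s∈𝓕} be a family of real numbers with σ_s > 1 for every s ∈ 𝓕, and assume that (Σ_{s∈𝓕} p_s(θ)^q σ_s^{-q})^{1/(θq)} ≤ K. Then for every ξ > 1 and every s ∈ Λ(ξ) one has |s|₁ ≤ K ξ^{1/(θq)}. -/
/-!
Since `∏ j (1 + s_j) ≥ 1 + |s|₁`, the term of index `s` in the series gives
`(1 + |s|₁)^(θq) σ_s^{-q} ≤ p_s(θ)^q σ_s^{-q} ≤ K^(θq)`; multiplying by `σ_s^q ≤ ξ` and taking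
the `θq`-th root yields `|s|₁ < 1 + |s|₁ ≤ K ξ^{1/(θq)}`.
-/

/-- `p_s(θ) = ∏_j (1 + s_j)^θ`, a finite product since `s` is finitely supported. -/
noncomputable def pFun (θ : ℝ) (s : ℕ →₀ ℕ) : ℝ :=
  ∏ j ∈ s.support, ((1 : ℝ) + s j) ^ θ

open Finset Real

theorem Finset.one_add_sum_le_prod_one_add {ι R : Type*} [CommSemiring R] [PartialOrder R]
    [IsOrderedRing R] (t : Finset ι) {f : ι → R} (hf : ∀ i ∈ t, 0 ≤ f i) :
    1 + ∑ i ∈ t, f i ≤ ∏ i ∈ t, (1 + f i) := by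
  classical
  induction t using Finset.induction_on with
  | empty => simp
  | insert a t ha ih =>
    rw [sum_insert ha, prod_insert ha]
    have hfa : 0 ≤ f a := hf a (mem_insert_self a t)
    have hsum : 0 ≤ ∑ i ∈ t, f i := sum_nonneg fun i hi => hf i (mem_insert_of_mem hi)
    calc 1 + (f a + ∑ i ∈ t, f i)
        ≤ 1 + (f a + ∑ i ∈ t, f i) + f a * ∑ i ∈ t, f i :=
          le_add_of_nonneg_right (mul_nonneg hfa hsum)
      _ = (1 + f a) * (1 + ∑ i ∈ t, f i) := by ring
      _ ≤ (1 + f a) * ∏ i ∈ t, (1 + f i) :=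
        mul_le_mul_of_nonneg_left (ih fun i hi => hf i (mem_insert_of_mem hi))
          (add_nonneg zero_le_one hfa)

theorem Finsupp.one_add_sum_le_prod_one_add (s : ℕ →₀ ℕ) :
    1 + ((s.sum fun _ n => n : ℕ) : ℝ) ≤ ∏ j ∈ s.support, (1 + (s j : ℝ)) := by
  simpa only [Finsupp.sum, Nat.cast_sum] using
    s.support.one_add_sum_le_prod_one_add fun j _ => Nat.cast_nonneg (α := ℝ) (s j)

theorem pFun_eq_rpow_prod (θ : ℝ) (s : ℕ →₀ ℕ) :
    pFun θ s = (∏ j ∈ s.support, (1 + (s j : ℝ))) ^ θ :=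
  finsetProd_rpow s.support (fun j => 1 + (s j : ℝ)) (fun j _ => by positivity) θ

theorem pFun_nonneg (θ : ℝ) (s : ℕ →₀ ℕ) : 0 ≤ pFun θ s :=
  prod_nonneg fun _ _ => rpow_nonneg (by positivity) θ

theorem one_add_sum_rpow_le_pFun_rpow {θ q : ℝ} (hθ : 0 ≤ θ) (hq : 0 ≤ q) (s : ℕ →₀ ℕ) :
    (1 + ((s.sum fun _ n => n : ℕ) : ℝ)) ^ (θ * q) ≤ pFun θ s ^ q := by
  rw [pFun_eq_rpow_prod, ← rpow_mul (by positivity)]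
  exact rpow_le_rpow (by positivity) s.one_add_sum_le_prod_one_add (mul_nonneg hθ hq)

theorem stmt_4_general (θ q K : ℝ) (hθ : 0 < θ) (hq : 0 < q)
    (σ : (ℕ →₀ ℕ) → ℝ) (hσ : ∀ s, 1 < σ s)
    (hsum : Summable fun s => pFun θ s ^ q * σ s ^ (-q))
    (hle : (∑' s, pFun θ s ^ q * σ s ^ (-q)) ^ (1 / (θ * q)) ≤ K) :
    ∀ ξ : ℝ, 1 < ξ → ∀ s : ℕ →₀ ℕ, σ s ^ q ≤ ξ →
      ((s.sum fun _ n => n : ℕ) : ℝ) ≤ K * ξ ^ (1 / (θ * q)) := by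
  intro ξ hξ s hsξ
  set N : ℝ := ((s.sum fun _ n => n : ℕ) : ℝ)
  set T := ∑' s, pFun θ s ^ q * σ s ^ (-q)
  have hθq : 0 < θ * q := mul_pos hθ hq
  have hσ₀ (s) : 0 < σ s := one_pos.trans (hσ s)
  have hterm_nonneg (s) : 0 ≤ pFun θ s ^ q * σ s ^ (-q) :=
    mul_nonneg (rpow_nonneg (pFun_nonneg θ s) q) (rpow_nonneg (hσ₀ s).le _)
  have hpow : (1 + N) ^ (θ * q) ≤ T * ξ :=
    calc (1 + N) ^ (θ * q) ≤ pFun θ s ^ q := one_add_sum_rpow_le_pFun_rpow hθ.le hq.le s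
      _ = pFun θ s ^ q * σ s ^ (-q) * σ s ^ q := by
        rw [mul_assoc, ← rpow_add (hσ₀ s), neg_add_cancel, rpow_zero, mul_one]
      _ ≤ T * ξ := mul_le_mul (hsum.le_tsum s fun b _ => hterm_nonneg b) hsξ
        (rpow_nonneg (hσ₀ s).le q) (tsum_nonneg hterm_nonneg)
  have hN : 1 + N ≤ K * ξ ^ (1 / (θ * q)) :=
    calc 1 + N ≤ (T * ξ) ^ (θ * q)⁻¹ :=
          (le_rpow_inv_iff_of_pos (by positivity)
            (mul_nonneg (tsum_nonneg hterm_nonneg) (by linarith)) hθq).2 hpow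
      _ = T ^ (1 / (θ * q)) * ξ ^ (1 / (θ * q)) := by
        rw [mul_rpow (tsum_nonneg hterm_nonneg) (by positivity), one_div]
      _ ≤ K * ξ ^ (1 / (θ * q)) := mul_le_mul_of_nonneg_right hle (by positivity)
  linarith

/-- Lemma A.1(ii): if `(∑_{s∈𝓕} p_s(θ)^q σ_s^{-q})^{1/(θq)} ≤ K`,
then for every `ξ > 1` and every `s ∈ Λ(ξ)` one has `|s|₁ ≤ K ξ^{1/(θq)}`. -/
theorem stmt_4 (θ q K : ℝ) (hθ : 0 < θ) (hq : 0 < q) (hK : 0 < K)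
    (σ : (ℕ →₀ ℕ) → ℝ) (hσ : ∀ s, 1 < σ s)
    (hsum : Summable fun s => pFun θ s ^ q * σ s ^ (-q))
    (hle : (∑' s, pFun θ s ^ q * σ s ^ (-q)) ^ (1 / (θ * q)) ≤ K) :
    ∀ ξ : ℝ, 1 < ξ → ∀ s : ℕ →₀ ℕ, σ s ^ q ≤ ξ →
      ((s.sum fun _ n => n : ℕ) : ℝ) ≤ K * ξ ^ (1 / (θ * q)) :=
  stmt_4_general θ q K hθ hq σ hσ hsum hle
end

section
/- Let 0 < q < ∞ and K_q > 0. Let σ = (σ_s)_{s∈𝓕} be a family of real numbers with σ_s > 1 for every s ∈ 𝓕, which is increasing with respect to the componentwise order (σ_{s'} ≤ σ_s whenever s'_j ≤ s_j for all j) and satisfies σ_{e^{i'}} ≤ σ_{e^{i}} whenever i' ≤ i, where e^i ∈ 𝓕 denotes the sequence with i-th entry 1 and all other entries 0. Assume Σ_{s∈𝓕} σ_s^{-q} ≤ K_q. Then for every ξ > 1, every s ∈ Λ(ξ) and every index j (counted from 1) with s_j > 0, one has j ≤ K_q ξ. -/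
/-!
For `i ≤ j` the two monotonicity hypotheses and `e^j ≤ s` give `σ_{e^i} ≤ σ_{e^j} ≤ σ_s`, hence
`σ_{e^i}^q ≤ ξ`, i.e. `σ_{e^i}^{-q} ≥ ξ⁻¹`. These `j + 1` distinct terms of the series
`∑ σ_s^{-q} ≤ K_q` already contribute at least `(j + 1) / ξ`.
-/

open Finset

lemma Real.inv_le_rpow_neg_of_rpow_le {x ξ q : ℝ} (hx : 0 < x) (h : x ^ q ≤ ξ) :
    ξ⁻¹ ≤ x ^ (-q) := by
  rw [Real.rpow_neg hx.le]
  exact inv_anti₀ (Real.rpow_pos_of_pos hx q) h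

lemma Finset.sum_comp_le_tsum_of_injective {α β : Type*} {f : β → ℝ} (hf : ∀ b, 0 ≤ f b)
    (hsum : Summable f) {g : α → β} (hg : Function.Injective g) (s : Finset α) :
    ∑ a ∈ s, f (g a) ≤ ∑' b, f b := by
  calc ∑ a ∈ s, f (g a) = ∑ b ∈ s.map ⟨g, hg⟩, f b := (Finset.sum_map s ⟨g, hg⟩ f).symm
    _ ≤ ∑' b, f b := hsum.sum_le_tsum _ fun b _ => hf b

lemma apply_single_le_apply_of_pos {σ : (ℕ →₀ ℕ) → ℝ} (hmono : ∀ s s' : ℕ →₀ ℕ, s' ≤ s → σ s' ≤ σ s)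
    (hsingle : ∀ i' i : ℕ, i' ≤ i → σ (Finsupp.single i' 1) ≤ σ (Finsupp.single i 1))
    {s : ℕ →₀ ℕ} {i j : ℕ} (hij : i ≤ j) (hj : 0 < s j) :
    σ (Finsupp.single i 1) ≤ σ s :=
  (hsingle i j hij).trans (hmono s _ (Finsupp.single_le_iff.mpr hj))

/-- The index `j : ℕ` is the paper's index `j + 1`. -/
theorem stmt_5_general (q Kq : ℝ) (hq : 0 < q)
    (σ : (ℕ →₀ ℕ) → ℝ) (hσ : ∀ s, 1 < σ s)
    (hmono : ∀ s s' : ℕ →₀ ℕ, s' ≤ s → σ s' ≤ σ s)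
    (hsingle : ∀ i' i : ℕ, i' ≤ i →
      σ (Finsupp.single i' 1) ≤ σ (Finsupp.single i 1))
    (hsum : Summable fun s => σ s ^ (-q))
    (hle : ∑' s, σ s ^ (-q) ≤ Kq) :
    ∀ ξ : ℝ, 1 < ξ → ∀ s : ℕ →₀ ℕ, σ s ^ q ≤ ξ → ∀ j : ℕ, 0 < s j →
      ((j : ℝ) + 1) ≤ Kq * ξ := by
  intro ξ hξ s hsξ j hj
  have hpos : ∀ t, 0 < σ t := fun t => one_pos.trans (hσ t)
  have hterm : ∀ i ∈ range (j + 1), ξ⁻¹ ≤ σ (Finsupp.single i 1) ^ (-q) := fun i hi =>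
    Real.inv_le_rpow_neg_of_rpow_le (hpos _) <|
      (Real.rpow_le_rpow (hpos _).le
        (apply_single_le_apply_of_pos hmono hsingle (Nat.lt_succ_iff.mp (mem_range.mp hi)) hj)
        hq.le).trans hsξ
  have hcount : ((j : ℝ) + 1) * ξ⁻¹ ≤ Kq :=
    calc ((j : ℝ) + 1) * ξ⁻¹ = ∑ _i ∈ range (j + 1), ξ⁻¹ := by simp
      _ ≤ ∑ i ∈ range (j + 1), σ (Finsupp.single i 1) ^ (-q) := sum_le_sum hterm
      _ ≤ ∑' t, σ t ^ (-q) :=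
        sum_comp_le_tsum_of_injective (fun t => (Real.rpow_pos_of_pos (hpos t) _).le) hsum
          (Finsupp.single_left_injective one_ne_zero) _
      _ ≤ Kq := hle
  rwa [← div_eq_mul_inv, div_le_iff₀ (one_pos.trans hξ)] at hcount

/-- Lemma A.1(iii): if `σ` is increasing for the componentwise
order on `𝓕 = ℕ →₀ ℕ`, monotone along the unit vectors `e^i = single i 1`, and
`∑_{s∈𝓕} σ_s^{-q} ≤ K_q`, then for every `ξ > 1`, every `s ∈ Λ(ξ)` and every
index `j` (counted from 1, i.e. the Lean index `j : ℕ` corresponds to the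
paper's index `j + 1`) with `s_j > 0`, one has `j + 1 ≤ K_q ξ`. -/
theorem stmt_5 (q Kq : ℝ) (hq : 0 < q) (hK : 0 < Kq)
    (σ : (ℕ →₀ ℕ) → ℝ) (hσ : ∀ s, 1 < σ s)
    (hmono : ∀ s s' : ℕ →₀ ℕ, s' ≤ s → σ s' ≤ σ s)
    (hsingle : ∀ i' i : ℕ, i' ≤ i →
      σ (Finsupp.single i' 1) ≤ σ (Finsupp.single i 1))
    (hsum : Summable fun s => σ s ^ (-q))
    (hle : ∑' s, σ s ^ (-q) ≤ Kq) :
    ∀ ξ : ℝ, 1 < ξ → ∀ s : ℕ →₀ ℕ, σ s ^ q ≤ ξ → ∀ j : ℕ, 0 < s j →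
      ((j : ℝ) + 1) ≤ Kq * ξ :=
  stmt_5_general q Kq hq σ hσ hmono hsingle hsum hle
end

section
/- There exists a constant K > 0 such that for all s, s' ∈ 𝓕, ∏_{j ∈ supp(s) ∪ supp(s')} ( Σ_{y : He_{s_j+1}(y) = 0} |H_{s'_j}(y)| ) ≤ e^{K |s|₁}, where the inner sum runs over the s_j + 1 distinct real roots y of He_{s_j+1} and H_n = He_n/√(n!) is the normalized Hermite polynomial. (This product equals the sum Σ_{k∈π_s} |H_{s'}(y_{s;k})| of the absolute values of the tensorized normalized Hermite polynomial H_{s'} over the sparse grid π_s of tensorized Hermite roots.) -/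
/-!
A root `y` of `He_{m+1}` satisfies `y² ≤ 4m`: if `y > 0` and `y² ≥ 4m`, the three-term recurrence
`He_{k+2} = y He_{k+1} - (k+1) He_k` propagates `He_{k+1}(y) ≥ (y/2) He_k(y) > 0` up to `k = m`,
and negative roots are handled by parity. Uniformly in `n`, `|He_n(y)| ≤ √(n!) e^{y²/2}`: the
Gaussian Fourier transform and integration by parts give
`∫ tⁿ e^{iyt - t²/2} dt = iⁿ √(2π) He_n(y) e^{-y²/2}`, and the absolute Gaussian moments
`M_n = ∫ |t|ⁿ e^{-t²/2} dt` obey `M_{n+2} = (n+1) M_n`, whence `M_n ≤ √(2π) √(n!)`. So the factor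
indexed by `j` is at most `(s_j + 1) e^{2 s_j} ≤ e^{3 s_j}`, and the product is at most `e^{3|s|₁}`.
-/

open Polynomial

namespace Polynomial

theorem derivative_hermite_succ (n : ℕ) :
    derivative (hermite (n + 1)) = (n + 1 : ℤ[X]) * hermite n := by
  induction n with
  | zero => simp
  | succ n ih =>
    rw [hermite_succ, derivative_sub, derivative_mul, derivative_X, one_mul, ih]
    simp only [derivative_mul, derivative_add, derivative_natCast, derivative_one, zero_mul,
      zero_add, Nat.cast_add, Nat.cast_one]
    linear_combination (-(n + 1) : ℤ[X]) * hermite_succ n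

theorem hermite_add_two (n : ℕ) :
    hermite (n + 2) = X * hermite (n + 1) - (n + 1 : ℤ[X]) * hermite n := by
  rw [hermite_succ (n + 1), derivative_hermite_succ]

theorem aeval_hermite_neg {R : Type*} [CommRing R] (n : ℕ) (x : R) :
    aeval (-x) (hermite n) = (-1) ^ n * aeval x (hermite n) := by
  induction n using Nat.twoStepInduction with
  | zero => simp
  | one => simp
  | more n ih₀ ih₁ =>
    rw [hermite_add_two]
    simp only [map_sub, map_mul, aeval_X, map_add, map_natCast, map_one, ih₀, ih₁]
    ring

section Ordered

variable {R : Type*} [Field R] [LinearOrder R] [IsStrictOrderedRing R]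

theorem aeval_hermite_succ_pos_and_ge {y : R} (hy : 0 < y) {k : ℕ} (hk : 4 * k ≤ y ^ 2) :
    0 < aeval y (hermite (k + 1)) ∧ y * aeval y (hermite k) ≤ 2 * aeval y (hermite (k + 1)) := by
  induction k with
  | zero => simpa using ⟨hy, by linarith⟩
  | succ k ih =>
    push_cast at hk
    obtain ⟨hpos, hge⟩ := ih (by linarith)
    rw [hermite_add_two]
    simp only [map_sub, map_mul, aeval_X, map_add, map_natCast, map_one]
    have key : y * aeval y (hermite (k + 1)) ≤
        2 * (y * aeval y (hermite (k + 1)) - (k + 1) * aeval y (hermite k)) :=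
      le_of_mul_le_mul_left (by nlinarith [mul_le_mul_of_nonneg_right hk hpos.le]) hy
    exact ⟨by linarith [mul_pos hy hpos], key⟩

theorem sq_le_of_aeval_hermite_succ_eq_zero {y : R} {m : ℕ}
    (h : aeval y (hermite (m + 1)) = 0) : y ^ 2 ≤ 4 * m := by
  by_contra! hlt
  rcases lt_trichotomy y 0 with hy | rfl | hy
  · have := (aeval_hermite_succ_pos_and_ge (neg_pos.2 hy) (by rw [neg_sq]; exact hlt.le)).1
    rw [aeval_hermite_neg, h, mul_zero] at this
    exact this.false
  · rw [zero_pow two_ne_zero] at hlt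
    exact hlt.not_ge (by positivity)
  · exact (aeval_hermite_succ_pos_and_ge hy hlt.le).1.ne' h

end Ordered

end Polynomial

open Real MeasureTheory Set
open scoped Nat

theorem integrable_abs_pow_mul_exp_neg_mul_sq {b : ℝ} (hb : 0 < b) (n : ℕ) :
    Integrable fun t : ℝ => |t| ^ n * exp (-b * t ^ 2) := by
  have := (integrable_rpow_mul_exp_neg_mul_sq hb (s := n) (by linarith [n.cast_nonneg (α := ℝ)])).abs
  simpa [Real.rpow_natCast, abs_mul] using this

theorem integral_abs_pow_mul_exp_neg_half_sq (n : ℕ) :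
    ∫ t : ℝ, |t| ^ n * exp (-(1 / 2) * t ^ 2) =
      2 ^ (((n : ℝ) + 1) / 2) * Gamma (((n : ℝ) + 1) / 2) := by
  have h := integral_rpow_mul_exp_neg_mul_rpow (p := 2) (q := n) (b := 1 / 2) two_pos
    (by linarith [n.cast_nonneg (α := ℝ)]) one_half_pos
  simp only [Real.rpow_natCast, Real.rpow_two] at h
  calc ∫ t : ℝ, |t| ^ n * exp (-(1 / 2) * t ^ 2)
      = ∫ t : ℝ, (fun x => x ^ n * exp (-(1 / 2) * x ^ 2)) |t| := by simp only [sq_abs]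
    _ = 2 * ∫ x in Ioi 0, x ^ n * exp (-(1 / 2) * x ^ 2) :=
        integral_comp_abs (f := fun x => x ^ n * exp (-(1 / 2) * x ^ 2))
    _ = _ := by
      rw [h, show -((n : ℝ) + 1) / 2 = -(((n : ℝ) + 1) / 2) by ring,
        Real.rpow_neg one_half_pos.le, one_div, Real.inv_rpow two_pos.le, inv_inv]
      ring

theorem integral_abs_pow_add_two_mul_exp_neg_half_sq (n : ℕ) :
    ∫ t : ℝ, |t| ^ (n + 2) * exp (-(1 / 2) * t ^ 2) =
      (n + 1) * ∫ t : ℝ, |t| ^ n * exp (-(1 / 2) * t ^ 2) := by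
  have hpos : ((n : ℝ) + 1) / 2 ≠ 0 := by positivity
  rw [integral_abs_pow_mul_exp_neg_half_sq, integral_abs_pow_mul_exp_neg_half_sq,
    show ((n + 2 : ℕ) + 1 : ℝ) / 2 = ((n : ℝ) + 1) / 2 + 1 by push_cast; ring,
    Real.Gamma_add_one hpos, Real.rpow_add_one two_ne_zero]
  field_simp

theorem integral_abs_pow_mul_exp_neg_half_sq_le (n : ℕ) :
    ∫ t : ℝ, |t| ^ n * exp (-(1 / 2) * t ^ 2) ≤ √(2 * π) * √(n ! : ℝ) := by
  induction n using Nat.twoStepInduction with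
  | zero =>
    rw [integral_abs_pow_mul_exp_neg_half_sq]
    norm_num [Real.Gamma_one_half_eq, ← Real.sqrt_eq_rpow, ← Real.sqrt_mul]
  | one =>
    rw [integral_abs_pow_mul_exp_neg_half_sq]
    simp only [Nat.cast_one, Nat.factorial_one, show ((1 : ℝ) + 1) / 2 = 1 by norm_num,
      Real.rpow_one, Real.Gamma_one, mul_one, Real.sqrt_one]
    exact Real.le_sqrt_of_sq_le (by nlinarith [Real.pi_gt_three])
  | more n ih _ =>
    rw [integral_abs_pow_add_two_mul_exp_neg_half_sq]
    calc ((n : ℝ) + 1) * ∫ t : ℝ, |t| ^ n * exp (-(1 / 2) * t ^ 2)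
        ≤ (n + 1) * (√(2 * π) * √(n ! : ℝ)) := by gcongr
      _ = √(2 * π) * √((n + 1) ^ 2 * n !) := by
        rw [Real.sqrt_mul' _ (Nat.cast_nonneg _), Real.sqrt_sq (by positivity)]; ring
      _ ≤ √(2 * π) * √((n + 2) ! : ℝ) := by
        gcongr
        push_cast [Nat.factorial_succ]
        nlinarith

open Complex

noncomputable def gaussFourierIntegrand (n : ℕ) (y t : ℝ) : ℂ :=
  (t : ℂ) ^ n * cexp (I * y * t) * cexp (-(1 / 2) * t ^ 2)

theorem norm_gaussFourierIntegrand (n : ℕ) (y t : ℝ) :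
    ‖gaussFourierIntegrand n y t‖ = |t| ^ n * Real.exp (-(1 / 2) * t ^ 2) := by
  simp only [gaussFourierIntegrand, norm_mul, norm_pow, Complex.norm_exp, Complex.norm_real,
    Real.norm_eq_abs]
  congr 2 <;> simp [sq]

theorem integrable_gaussFourierIntegrand (n : ℕ) (y : ℝ) :
    Integrable (gaussFourierIntegrand n y) := by
  refine (integrable_abs_pow_mul_exp_neg_mul_sq one_half_pos n).mono' ?_
    (.of_forall fun t => (norm_gaussFourierIntegrand n y t).le)
  unfold gaussFourierIntegrand
  fun_prop

theorem hasDerivAt_gaussFourierIntegrand (n : ℕ) (y t : ℝ) :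
    HasDerivAt (gaussFourierIntegrand n y)
      (n * gaussFourierIntegrand (n - 1) y t + I * y * gaussFourierIntegrand n y t -
        gaussFourierIntegrand (n + 1) y t) t := by
  have hpow : HasDerivAt (fun s : ℂ => s ^ n) (n * (t : ℂ) ^ (n - 1)) t := by
    simpa using hasDerivAt_pow n (t : ℂ)
  have hosc : HasDerivAt (fun s : ℂ => cexp (I * y * s)) (cexp (I * y * t) * (I * y)) t := by
    simpa using ((hasDerivAt_id (t : ℂ)).const_mul (I * y)).cexp
  have hgauss : HasDerivAt (fun s : ℂ => cexp (-(1 / 2) * s ^ 2))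
      (cexp (-(1 / 2) * t ^ 2) * (-t)) t := by
    simpa using ((hasDerivAt_pow 2 (t : ℂ)).const_mul (-(1 / 2) : ℂ)).cexp
  convert ((hpow.mul hosc).mul hgauss).comp_ofReal using 1
  · rfl
  simp only [gaussFourierIntegrand, Pi.mul_apply]
  rcases n with _ | n
  · simp only [CharP.cast_eq_zero, zero_mul, zero_add, pow_zero, pow_one, one_mul]
    ring
  · push_cast; ring

theorem integral_gaussFourierIntegrand_succ (n : ℕ) (y : ℝ) :
    ∫ t, gaussFourierIntegrand (n + 1) y t =
      I * y * (∫ t, gaussFourierIntegrand n y t) + n * ∫ t, gaussFourierIntegrand (n - 1) y t := by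
  have hA : Integrable fun t => (n : ℂ) * gaussFourierIntegrand (n - 1) y t :=
    (integrable_gaussFourierIntegrand _ y).const_mul _
  have hB : Integrable fun t => I * y * gaussFourierIntegrand n y t :=
    (integrable_gaussFourierIntegrand _ y).const_mul _
  have hC := integrable_gaussFourierIntegrand (n + 1) y
  have hAB : Integrable fun t =>
      (n : ℂ) * gaussFourierIntegrand (n - 1) y t + I * y * gaussFourierIntegrand n y t :=
    hA.add hB
  have h := integral_eq_zero_of_hasDerivAt_of_integrable (hasDerivAt_gaussFourierIntegrand n y)
    (hAB.sub hC) (integrable_gaussFourierIntegrand n y)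
  rw [integral_sub hAB hC, integral_add hA hB, integral_const_mul,
    integral_const_mul] at h
  linear_combination -h

theorem integral_gaussFourierIntegrand_zero (y : ℝ) :
    ∫ t, gaussFourierIntegrand 0 y t = (√(2 * π) * Real.exp (-(1 / 2) * y ^ 2) : ℝ) := by
  simp only [gaussFourierIntegrand, pow_zero, one_mul]
  rw [fourierIntegral_gaussian (by norm_num),
    show (π : ℂ) / (1 / 2) = ((2 * π : ℝ) : ℂ) by push_cast; ring,
    show (1 / 2 : ℂ) = ((1 / 2 : ℝ) : ℂ) by norm_num, ← ofReal_cpow (by positivity),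
    ← Real.sqrt_eq_rpow]
  push_cast
  ring_nf

theorem integral_gaussFourierIntegrand (n : ℕ) (y : ℝ) :
    ∫ t, gaussFourierIntegrand n y t =
      I ^ n * (√(2 * π) * aeval y (hermite n) * Real.exp (-(1 / 2) * y ^ 2) : ℝ) := by
  induction n using Nat.twoStepInduction with
  | zero => simp [integral_gaussFourierIntegrand_zero]
  | one =>
    rw [integral_gaussFourierIntegrand_succ 0, integral_gaussFourierIntegrand_zero, hermite_one,
      aeval_X]
    push_cast
    ring
  | more n ih₀ ih₁ =>
    rw [integral_gaussFourierIntegrand_succ (n + 1), Nat.add_sub_cancel, ih₁, ih₀,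
      hermite_add_two]
    simp only [map_sub, map_mul, aeval_X, map_add, map_natCast, map_one]
    push_cast
    linear_combination (n + 1 : ℂ) * I ^ n * (√(2 * π) : ℝ) * (aeval y (hermite n) : ℝ) *
      cexp (-(1 / 2) * y ^ 2) * I_sq

theorem abs_aeval_hermite_le (n : ℕ) (y : ℝ) :
    |aeval y (hermite n)| ≤ √(n ! : ℝ) * Real.exp (1 / 2 * y ^ 2) := by
  have key : √(2 * π) * (|aeval y (hermite n)| * Real.exp (-(1 / 2) * y ^ 2)) ≤
      √(2 * π) * √(n ! : ℝ) :=
    calc √(2 * π) * (|aeval y (hermite n)| * Real.exp (-(1 / 2) * y ^ 2))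
        = ‖∫ t, gaussFourierIntegrand n y t‖ := by
          rw [integral_gaussFourierIntegrand, norm_mul, norm_pow, Complex.norm_I, one_pow,
            one_mul, Complex.norm_real, Real.norm_eq_abs, abs_mul, abs_mul,
            abs_of_nonneg (Real.sqrt_nonneg _), Real.abs_exp, mul_assoc]
      _ ≤ ∫ t, ‖gaussFourierIntegrand n y t‖ := norm_integral_le_integral_norm _
      _ = ∫ t : ℝ, |t| ^ n * Real.exp (-(1 / 2) * t ^ 2) := by
          simp only [norm_gaussFourierIntegrand]
      _ ≤ √(2 * π) * √(n ! : ℝ) := integral_abs_pow_mul_exp_neg_half_sq_le n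
  calc |aeval y (hermite n)|
      = |aeval y (hermite n)| * Real.exp (-(1 / 2) * y ^ 2) * Real.exp (1 / 2 * y ^ 2) := by
        rw [mul_assoc, ← Real.exp_add, neg_mul, neg_add_cancel, Real.exp_zero, mul_one]
    _ ≤ √(n ! : ℝ) * Real.exp (1 / 2 * y ^ 2) := by
        gcongr
        exact le_of_mul_le_mul_left key (by positivity)

theorem sum_roots_hermite_succ_abs_aeval_hermite_div_le (m n : ℕ) :
    ∑ y ∈ (((hermite (m + 1)).map (Int.castRingHom ℝ)).roots).toFinset,
        |aeval y (hermite n)| / √(n ! : ℝ) ≤ Real.exp (3 * m) := by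
  set roots := (((hermite (m + 1)).map (Int.castRingHom ℝ)).roots).toFinset
  have hterm : ∀ y ∈ roots, |aeval y (hermite n)| / √(n ! : ℝ) ≤ Real.exp (2 * m) := by
    intro y hy
    have hroot : aeval y (hermite (m + 1)) = 0 := by
      rwa [Multiset.mem_toFinset, mem_roots_map_of_injective (RingHom.injective_int _)
        (hermite_monic _).ne_zero, ← algebraMap_int_eq, ← aeval_def] at hy
    have hy2 := sq_le_of_aeval_hermite_succ_eq_zero hroot
    rw [div_le_iff₀ (by positivity), mul_comm]
    calc |aeval y (hermite n)| ≤ √(n ! : ℝ) * Real.exp (1 / 2 * y ^ 2) := abs_aeval_hermite_le n y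
      _ ≤ √(n ! : ℝ) * Real.exp (2 * m) := by gcongr √(n ! : ℝ) * Real.exp ?_; linarith
  have hcard : (roots.card : ℝ) ≤ m + 1 := by
    have := (Multiset.toFinset_card_le _).trans
      (card_roots' ((hermite (m + 1)).map (Int.castRingHom ℝ)))
    rw [(hermite_monic _).natDegree_map, natDegree_hermite] at this
    exact_mod_cast this
  calc ∑ y ∈ roots, |aeval y (hermite n)| / √(n ! : ℝ)
      ≤ roots.card * Real.exp (2 * m) := by
        simpa only [nsmul_eq_mul] using Finset.sum_le_card_nsmul _ _ _ hterm
    _ ≤ Real.exp m * Real.exp (2 * m) := by gcongr; linarith [Real.add_one_le_exp (m : ℝ)]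
    _ = Real.exp (3 * m) := by rw [← Real.exp_add]; ring_nf

/-- Lemma A.3: there is `K > 0` such that for all `s, s' ∈ 𝓕`,
`∏_{j ∈ supp s ∪ supp s'} ( ∑_{y : He_{s_j+1}(y)=0} |H_{s'_j}(y)| ) ≤ e^{K|s|₁}`,
the inner sum running over the distinct real roots of `He_{s_j+1}` and
`H_n = He_n / √(n!)` being the normalized probabilist Hermite polynomial. -/
theorem stmt_8 :
    ∃ K > (0 : ℝ), ∀ s s' : ℕ →₀ ℕ,
      (∏ j ∈ s.support ∪ s'.support,
        ∑ y ∈ (((Polynomial.hermite (s j + 1)).map (Int.castRingHom ℝ)).roots).toFinset,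
          |Polynomial.aeval y (Polynomial.hermite (s' j))| / Real.sqrt ((s' j).factorial))
      ≤ Real.exp (K * ((s.sum fun _ n => n : ℕ) : ℝ)) := by
  refine ⟨3, by norm_num, fun s s' => ?_⟩
  calc _ ≤ ∏ j ∈ s.support ∪ s'.support, Real.exp (3 * s j) :=
        Finset.prod_le_prod (fun j _ => Finset.sum_nonneg fun y _ => by positivity)
          fun j _ => sum_roots_hermite_succ_abs_aeval_hermite_div_le (s j) (s' j)
    _ = Real.exp (3 * ∑ j ∈ s.support ∪ s'.support, (s j : ℝ)) := by
        rw [← Real.exp_sum, Finset.mul_sum]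
    _ = Real.exp (3 * ((s.sum fun _ n => n : ℕ) : ℝ)) := by
        rw [Finsupp.sum_of_support_subset s Finset.subset_union_left _ fun _ _ => rfl, Nat.cast_sum]
end

section
/- There exists a constant K > 0 such that for every s ∈ ℕ and every root y₀ of He_{s+1}, the Lagrange basis polynomial L_{s;y₀} satisfies (∫_ℝ L_{s;y₀}(y)² dγ(y))^{1/2} ≤ e^{K s}. -/
open ProbabilityTheory

/-- The Lagrange basis polynomial (as a function) associated with the root `y₀`
of the probabilist Hermite polynomial `He_{s+1}`:
`L_{s;y₀}(y) = ∏_{y' root of He_{s+1}, y' ≠ y₀} (y - y')/(y₀ - y')`. -/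
noncomputable def lagrangeHermite (s : ℕ) (y₀ y : ℝ) : ℝ :=
  ∏ y' ∈ ((((Polynomial.hermite (s + 1)).map (Int.castRingHom ℝ)).roots).toFinset).erase y₀,
    (y - y') / (y₀ - y')

/-!
`He_n` is orthogonal in `L²(γ)` to every polynomial of lower degree (Stein's identity
`∫ q' dγ = ∫ x q dγ`, iterated through `He_{n+1} = X He_n - He_n'`). This forces its roots to be
real and simple: multiplying `He_n` by the linear factors of its odd-multiplicity roots gives a
nonnegative nonzero polynomial, whose integral would vanish by orthogonality if there were fewer
than `n` of them.
Hence Gauss quadrature at the roots of `He_{s+1}` is exact in degree `≤ 2s + 1`, with weights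
`w_y = ∫ L_{s;y} dγ`. Applied to `L_{s;y₀}²` and to `1` it gives `∫ L_{s;y₀}² dγ = w_{y₀}` and
`∑ w_y = 1` with all `w_y ≥ 0`, so `∫ L_{s;y₀}² dγ ≤ 1`.
-/

open Polynomial MeasureTheory Finset
open scoped NNReal

lemma integrable_eval_of_integrable_pow {μ : Measure ℝ}
    (hμ : ∀ n : ℕ, Integrable (fun x => x ^ n) μ) (p : ℝ[X]) :
    Integrable (fun x => p.eval x) μ := by
  simp_rw [eval_eq_sum_range]
  exact integrable_finsetSum _ fun i _ => (hμ i).const_mul _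

lemma integral_eval_pos {μ : Measure ℝ} [NeZero μ] [NullSingletonClass μ] {w : ℝ[X]}
    (hw : Integrable (fun x => w.eval x) μ) (hw0 : w ≠ 0) (hnn : ∀ x, 0 ≤ w.eval x) :
    0 < ∫ x, w.eval x ∂μ := by
  rw [integral_pos_iff_support_of_nonneg hnn hw]
  have hroots : μ {x | w.IsRoot x} = 0 := (finite_setOfPred_isRoot hw0).measure_zero μ
  calc 0 < μ Set.univ := Measure.measure_univ_pos.mpr (NeZero.ne μ)
    _ = μ {x | w.IsRoot x}ᶜ := (measure_congr (ae_eq_univ.mpr (by rwa [compl_compl]))).symm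
    _ ≤ μ (Function.support fun x => w.eval x) := measure_mono fun x hx => hx

lemma Continuous.mul_pos_of_forall_ne_zero {f : ℝ → ℝ} (hf : Continuous f) (h : ∀ x, f x ≠ 0)
    (a b : ℝ) : 0 < f a * f b := by
  by_contra! hab
  obtain ⟨c, -, hc⟩ : ∃ c ∈ Set.uIcc a b, f c = 0 := by
    refine intermediate_value_uIcc hf.continuousOn (Set.mem_uIcc.mpr ?_)
    rcases mul_nonpos_iff.mp hab with h | h
    exacts [.inr h.symm, .inl h]
  exact h c hc

noncomputable def oddMultiplicityRoots (P : ℝ[X]) : Finset ℝ :=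
  P.roots.toFinset.filter fun r => Odd (P.roots.count r)

lemma exists_C_mul_nodal_oddMultiplicityRoots_mul_nonneg {P : ℝ[X]} (hP : P ≠ 0) :
    ∃ c : ℝ, c ≠ 0 ∧
      ∀ x, 0 ≤ (C c * Lagrange.nodal (oddMultiplicityRoots P) id * P).eval x := by
  obtain ⟨u, hPu, -, hu⟩ := P.exists_prod_multiset_X_sub_C_mul
  have hu0 : u ≠ 0 := by rintro rfl; exact hP (by simpa using hPu.symm)
  have hu_ne (x : ℝ) : u.eval x ≠ 0 := fun hx => by
    simpa [hu] using (mem_roots hu0).mpr hx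
  refine ⟨u.eval 0, hu_ne 0, fun x => ?_⟩
  have hPx : P.eval x = (∏ r ∈ P.roots.toFinset, (x - r) ^ P.roots.count r) * u.eval x := by
    conv_lhs => rw [← hPu]
    rw [eval_mul, eval_multiset_prod, Multiset.map_map, ← prod_multiset_map_count]
    simp
  have hfactor (y : ℝ) (k : ℕ) : 0 ≤ (if Odd k then y else 1) * y ^ k := by
    split_ifs with hk
    · rw [← pow_succ']; exact hk.add_one.pow_nonneg y
    · rw [one_mul]; exact (Nat.not_odd_iff_even.mp hk).pow_nonneg y
  rw [eval_mul, eval_mul, eval_C, hPx, Lagrange.eval_nodal, oddMultiplicityRoots, prod_filter]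
  calc (0 : ℝ) ≤ (u.eval 0 * u.eval x) * ∏ r ∈ P.roots.toFinset,
        (if Odd (P.roots.count r) then x - r else 1) * (x - r) ^ P.roots.count r :=
      mul_nonneg (u.continuous.mul_pos_of_forall_ne_zero hu_ne 0 x).le
        (prod_nonneg fun r _ => hfactor _ _)
    _ = _ := by rw [prod_mul_distrib]; simp only [id]; ring

theorem natDegree_le_card_oddMultiplicityRoots {μ : Measure ℝ} [NeZero μ] [NullSingletonClass μ]
    (hμ : ∀ p : ℝ[X], Integrable (fun x => p.eval x) μ) {P : ℝ[X]} (hP : P ≠ 0)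
    (horth : ∀ q : ℝ[X], q.natDegree < P.natDegree → ∫ x, (q * P).eval x ∂μ = 0) :
    P.natDegree ≤ #(oddMultiplicityRoots P) := by
  obtain ⟨c, hc, hnonneg⟩ := exists_C_mul_nodal_oddMultiplicityRoots_mul_nonneg hP
  by_contra! hlt
  have hq : (C c * Lagrange.nodal (oddMultiplicityRoots P) id).natDegree < P.natDegree := by
    rwa [natDegree_C_mul hc, Lagrange.natDegree_nodal]
  have hw0 : C c * Lagrange.nodal (oddMultiplicityRoots P) id * P ≠ 0 :=
    mul_ne_zero (mul_ne_zero (C_ne_zero.mpr hc) Lagrange.nodal_ne_zero) hP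
  exact (integral_eval_pos (hμ _) hw0 hnonneg).ne' (horth _ hq)

theorem nodal_roots_toFinset_eq_of_orthogonal {μ : Measure ℝ} [NeZero μ] [NullSingletonClass μ]
    (hμ : ∀ p : ℝ[X], Integrable (fun x => p.eval x) μ) {P : ℝ[X]} (hP : P.Monic)
    (horth : ∀ q : ℝ[X], q.natDegree < P.natDegree → ∫ x, (q * P).eval x ∂μ = 0) :
    Lagrange.nodal P.roots.toFinset id = P := by
  have hle : P.natDegree ≤ #P.roots.toFinset :=
    (natDegree_le_card_oddMultiplicityRoots hμ hP.ne_zero horth).trans (card_filter_le _ _)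
  have hcard : Multiset.card P.roots = P.natDegree :=
    (card_roots' P).antisymm (hle.trans (Multiset.toFinset_card_le _))
  have hnodup : P.roots.Nodup := Multiset.toFinset_card_eq_card_iff_nodup.mp
    ((Multiset.toFinset_card_le _).antisymm (hcard ▸ hle))
  rw [Lagrange.nodal_eq, prod_eq_multiset_prod, Multiset.toFinset_val, hnodup.dedup]
  exact prod_multiset_X_sub_C_of_monic_of_roots_card_eq hP hcard

section GaussQuadrature

variable {μ : Measure ℝ} {T : Finset ℝ}

lemma eval_modByMonic_nodal {i : ℝ} (hi : i ∈ T) (f : ℝ[X]) :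
    (f %ₘ Lagrange.nodal T id).eval i = f.eval i := by
  conv_rhs => rw [← modByMonic_add_div f (Lagrange.nodal T id)]
  simpa using .inl (Lagrange.eval_nodal_at_node (v := id) hi)

theorem integral_eval_eq_sum_eval_mul_integral_basis
    (hμ : ∀ p : ℝ[X], Integrable (fun x => p.eval x) μ)
    (horth : ∀ q : ℝ[X], q.natDegree < #T → ∫ x, (q * Lagrange.nodal T id).eval x ∂μ = 0)
    {f : ℝ[X]} (hf : f.natDegree < 2 * #T) :
    ∫ x, f.eval x ∂μ = ∑ i ∈ T, f.eval i * ∫ x, (Lagrange.basis T id i).eval x ∂μ := by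
  have hP : (Lagrange.nodal T id).Monic := Lagrange.nodal_monic
  have hdeg : (Lagrange.nodal T id).natDegree = #T := Lagrange.natDegree_nodal
  have hrem : f %ₘ Lagrange.nodal T id = Lagrange.interpolate T id (fun i => f.eval i) := by
    refine Lagrange.eq_interpolate_of_eval_eq _ (Set.injOn_id _) ?_
      fun i hi => eval_modByMonic_nodal hi f
    simpa [degree_eq_natDegree hP.ne_zero, hdeg] using degree_modByMonic_lt f hP
  have hquot : (f /ₘ Lagrange.nodal T id).natDegree < #T := by
    rw [natDegree_divByMonic f hP, hdeg]; omega
  conv_lhs => rw [← modByMonic_add_div f (Lagrange.nodal T id)]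
  simp only [eval_add]
  rw [integral_add (hμ _) (hμ _), mul_comm (Lagrange.nodal T id), horth _ hquot, add_zero, hrem,
    Lagrange.interpolate_apply]
  simp only [eval_finsetSum, eval_mul, eval_C]
  rw [integral_finsetSum _ fun i _ => (hμ _).const_mul _]
  simp_rw [integral_const_mul]

theorem integral_eval_basis_sq
    (hμ : ∀ p : ℝ[X], Integrable (fun x => p.eval x) μ)
    (horth : ∀ q : ℝ[X], q.natDegree < #T → ∫ x, (q * Lagrange.nodal T id).eval x ∂μ = 0)
    {i : ℝ} (hi : i ∈ T) :
    ∫ x, (Lagrange.basis T id i).eval x ^ 2 ∂μ = ∫ x, (Lagrange.basis T id i).eval x ∂μ := by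
  have hdeg : (Lagrange.basis T id i ^ 2).natDegree < 2 * #T := by
    rw [natDegree_pow, Lagrange.natDegree_basis (Set.injOn_id _) hi]
    have := card_pos.mpr ⟨i, hi⟩
    omega
  have h := integral_eval_eq_sum_eval_mul_integral_basis hμ horth hdeg
  simp only [eval_pow] at h
  have hself : (Lagrange.basis T id i).eval i = 1 :=
    Lagrange.eval_basis_self (v := id) (Set.injOn_id _) hi
  rw [h, sum_eq_single_of_mem i hi fun j hj hji => by
    rw [show (Lagrange.basis T id i).eval j = 0 from
      Lagrange.eval_basis_of_ne (v := id) hji.symm hj]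
    ring, hself, one_pow, one_mul]

lemma sum_integral_eval_basis (hμ : ∀ p : ℝ[X], Integrable (fun x => p.eval x) μ)
    (hT : T.Nonempty) :
    ∑ i ∈ T, ∫ x, (Lagrange.basis T id i).eval x ∂μ = μ.real Set.univ := by
  rw [← integral_finsetSum _ fun i _ => hμ _]
  simp_rw [← eval_finsetSum, Lagrange.sum_basis (Set.injOn_id _) hT]
  simp

theorem integral_eval_basis_sq_le_one [IsProbabilityMeasure μ]
    (hμ : ∀ p : ℝ[X], Integrable (fun x => p.eval x) μ)
    (horth : ∀ q : ℝ[X], q.natDegree < #T → ∫ x, (q * Lagrange.nodal T id).eval x ∂μ = 0)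
    {i : ℝ} (hi : i ∈ T) :
    ∫ x, (Lagrange.basis T id i).eval x ^ 2 ∂μ ≤ 1 := by
  have hweight_nonneg (j : ℝ) (hj : j ∈ T) : 0 ≤ ∫ x, (Lagrange.basis T id j).eval x ∂μ :=
    integral_eval_basis_sq hμ horth hj ▸ integral_nonneg fun x => sq_nonneg _
  calc _ = ∫ x, (Lagrange.basis T id i).eval x ∂μ := integral_eval_basis_sq hμ horth hi
    _ ≤ ∑ j ∈ T, ∫ x, (Lagrange.basis T id j).eval x ∂μ := single_le_sum hweight_nonneg hi
    _ = 1 := by rw [sum_integral_eval_basis hμ ⟨i, hi⟩, probReal_univ]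

end GaussQuadrature

lemma integrable_pow_gaussianReal (m : ℝ) (v : ℝ≥0) (n : ℕ) :
    Integrable (fun x => x ^ n) (gaussianReal m v) :=
  (memLp_id_gaussianReal n).integrable_norm_pow'.mono' (by fun_prop)
    (.of_forall fun x => by simp [norm_pow])

lemma integrable_eval_gaussianReal (m : ℝ) (v : ℝ≥0) (p : ℝ[X]) :
    Integrable (fun x => p.eval x) (gaussianReal m v) :=
  integrable_eval_of_integrable_pow (integrable_pow_gaussianReal m v) p

lemma hasDerivAt_gaussianPDFReal (m : ℝ) (v : ℝ≥0) (x : ℝ) :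
    HasDerivAt (gaussianPDFReal m v) (-((x - m) / v) * gaussianPDFReal m v x) x := by
  have h : HasDerivAt (fun y => -(y - m) ^ 2 / (2 * v)) (-(2 * (x - m)) / (2 * v)) x := by
    simpa using (((hasDerivAt_id x).sub_const m).pow 2).neg.div_const (2 * (v : ℝ))
  rw [gaussianPDFReal_def]
  exact (h.exp.const_mul _).congr_deriv (by ring)

lemma integrable_gaussianPDFReal_mul_eval (m : ℝ) {v : ℝ≥0} (hv : v ≠ 0) (p : ℝ[X]) :
    Integrable (fun x => gaussianPDFReal m v x * p.eval x) := by
  have h := integrable_eval_gaussianReal m v p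
  rw [gaussianReal_of_var_ne_zero m hv, integrable_withDensity_iff_integrable_smul'
    (measurable_gaussianPDF m v) (.of_forall fun _ => gaussianPDF_lt_top)] at h
  simpa only [toReal_gaussianPDF, smul_eq_mul] using h

theorem integral_eval_derivative_gaussianReal (m : ℝ) {v : ℝ≥0} (hv : v ≠ 0) (q : ℝ[X]) :
    v * ∫ x, (derivative q).eval x ∂gaussianReal m v =
      ∫ x, (x - m) * q.eval x ∂gaussianReal m v := by
  have hV (x : ℝ) : HasDerivAt (fun y => v * gaussianPDFReal m v y)
      (-(x - m) * gaussianPDFReal m v x) x :=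
    ((hasDerivAt_gaussianPDFReal m v x).const_mul (v : ℝ)).congr_deriv (by
      field_simp [NNReal.coe_ne_zero.mpr hv])
  have hint (p : ℝ[X]) := integrable_gaussianPDFReal_mul_eval m hv p
  have hibp := integral_mul_deriv_eq_deriv_mul_of_integrable (fun x _ => q.hasDerivAt x)
    (fun x _ => hV x) ((hint ((C m - X) * q)).congr
      (.of_forall fun x => by simp only [Pi.mul_apply, eval_mul, eval_sub, eval_C, eval_X]; ring))
    (((hint (derivative q)).const_mul v).congr
      (.of_forall fun x => by simp only [Pi.mul_apply]; ring))
    (((hint q).const_mul v).congr (.of_forall fun x => by simp only [Pi.mul_apply]; ring))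
  simp only [integral_gaussianReal_eq_integral_smul hv, smul_eq_mul, ← integral_const_mul]
  simp only [neg_mul, mul_neg, integral_neg, neg_inj] at hibp
  calc _ = ∫ x, (derivative q).eval x * (v * gaussianPDFReal m v x) := by congr 1; ext; ring
    _ = ∫ x, q.eval x * ((x - m) * gaussianPDFReal m v x) := hibp.symm
    _ = _ := by congr 1; ext; ring

noncomputable def hermiteReal (n : ℕ) : ℝ[X] := (hermite n).map (Int.castRingHom ℝ)

lemma hermiteReal_monic (n : ℕ) : (hermiteReal n).Monic := (hermite_monic n).map _

lemma natDegree_hermiteReal (n : ℕ) : (hermiteReal n).natDegree = n := by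
  rw [hermiteReal, natDegree_map_eq_of_injective Int.cast_injective, natDegree_hermite]

lemma hermiteReal_succ (n : ℕ) :
    hermiteReal (n + 1) = X * hermiteReal n - derivative (hermiteReal n) := by
  simp only [hermiteReal, hermite_succ, Polynomial.map_sub, Polynomial.map_mul, map_X,
    derivative_map]

lemma integral_eval_mul_hermiteReal_succ (p : ℝ[X]) (n : ℕ) :
    ∫ x, (p * hermiteReal (n + 1)).eval x ∂gaussianReal 0 1 =
      ∫ x, (derivative p * hermiteReal n).eval x ∂gaussianReal 0 1 := by
  have hint := integrable_eval_gaussianReal 0 1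
  have hstein := integral_eval_derivative_gaussianReal 0 one_ne_zero (p * hermiteReal n)
  rw [derivative_mul] at hstein
  simp only [eval_add, integral_add (hint _) (hint _), NNReal.coe_one, one_mul, sub_zero]
    at hstein
  simp only [hermiteReal_succ, mul_sub, eval_sub]
  rw [integral_sub (hint _) (hint _)]
  have hX : ∫ x, (p * (X * hermiteReal n)).eval x ∂gaussianReal 0 1 =
      ∫ x, x * (p * hermiteReal n).eval x ∂gaussianReal 0 1 := by
    congr 1; ext; simp only [eval_mul, eval_X]; ring
  linarith

theorem integral_eval_mul_hermiteReal_eq_zero {p : ℝ[X]} {n : ℕ} (hp : p.natDegree < n) :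
    ∫ x, (p * hermiteReal n).eval x ∂gaussianReal 0 1 = 0 := by
  induction n generalizing p with
  | zero => exact absurd hp (Nat.not_lt_zero _)
  | succ n ih =>
    rw [integral_eval_mul_hermiteReal_succ]
    by_cases hp0 : p.natDegree = 0
    · simp [derivative_of_natDegree_zero hp0]
    · exact ih ((natDegree_derivative_lt hp0).trans_le (by omega))

theorem nodal_roots_toFinset_hermiteReal (n : ℕ) :
    Lagrange.nodal (hermiteReal n).roots.toFinset id = hermiteReal n :=
  haveI := nullSingletonClass_gaussianReal (μ := 0) one_ne_zero
  nodal_roots_toFinset_eq_of_orthogonal (integrable_eval_gaussianReal 0 1) (hermiteReal_monic n)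
    fun _ hq => integral_eval_mul_hermiteReal_eq_zero (hq.trans_eq (natDegree_hermiteReal n))

lemma lagrangeHermite_eq_eval_basis (s : ℕ) (y₀ y : ℝ) :
    lagrangeHermite s y₀ y =
      (Lagrange.basis (hermiteReal (s + 1)).roots.toFinset id y₀).eval y := by
  rw [lagrangeHermite, Lagrange.basis, eval_prod]
  refine prod_congr rfl fun y' _ => ?_
  simp [Lagrange.basisDivisor, div_eq_inv_mul]

theorem integral_lagrangeHermite_sq_le_one (s : ℕ) {y₀ : ℝ}
    (hy₀ : y₀ ∈ (hermiteReal (s + 1)).roots.toFinset) :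
    ∫ y, lagrangeHermite s y₀ y ^ 2 ∂gaussianReal 0 1 ≤ 1 := by
  have hnodal := nodal_roots_toFinset_hermiteReal (s + 1)
  have hcard : #(hermiteReal (s + 1)).roots.toFinset = s + 1 := by
    rw [← Lagrange.natDegree_nodal (v := id), hnodal, natDegree_hermiteReal]
  simp_rw [lagrangeHermite_eq_eval_basis]
  exact integral_eval_basis_sq_le_one (integrable_eval_gaussianReal 0 1)
    (fun _ hq => by rw [hnodal]; exact integral_eval_mul_hermiteReal_eq_zero (hq.trans_eq hcard))
    hy₀

/-- Lemma A.4, inequality (norm-L_2): there is `K > 0` such that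
for every `s ≥ 1` and every root `y₀` of `He_{s+1}`,
`(∫_ℝ L_{s;y₀}(y)² dγ(y))^{1/2} ≤ e^{Ks}` where `γ` is the standard Gaussian
measure on `ℝ`. -/
theorem stmt_9 :
    ∃ K > (0 : ℝ), ∀ s : ℕ, 1 ≤ s →
      ∀ y₀ ∈ (((Polynomial.hermite (s + 1)).map (Int.castRingHom ℝ)).roots).toFinset,
        Real.sqrt (∫ y, lagrangeHermite s y₀ y ^ 2 ∂(gaussianReal 0 1)) ≤
          Real.exp (K * s) := by
  refine ⟨1, one_pos, fun s _ y₀ hy₀ => ?_⟩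
  calc Real.sqrt (∫ y, lagrangeHermite s y₀ y ^ 2 ∂(gaussianReal 0 1))
      ≤ 1 := Real.sqrt_le_one.mpr (integral_lagrangeHermite_sq_le_one s hy₀)
    _ ≤ Real.exp (1 * s) := Real.one_le_exp (by positivity)
end

section
/- Let p and q be real polynomials and y₀ ∈ ℝ be such that p(y) = (y − y₀) · q(y). Then for every k ≥ 0, the coefficients satisfy |coeff_k(q)| ≤ Σ_{j≥0} |coeff_j(p)| (the sum on the right being finite since p has finitely many nonzero coefficients). -/
private lemma sum_abs_coeff_le (p : Polynomial ℝ) (s : Finset ℕ) :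
    ∑ j ∈ s, |p.coeff j| ≤ ∑ j ∈ p.support, |p.coeff j| := by
  rw [← Finset.sum_filter_ne_zero s]
  apply Finset.sum_le_sum_of_subset_of_nonneg
  · intro j hj
    simp only [Finset.mem_filter] at hj
    simp only [Polynomial.mem_support_iff]
    intro h0
    exact hj.2 (by simp [h0])
  · intro j _ _
    exact abs_nonneg _

/-- Lemma A.5: if `p(y) = (y - y₀) q(y)` for real polynomials
`p, q` and `y₀ ∈ ℝ`, then every coefficient of `q` is bounded in absolute value
by the sum of the absolute values of the coefficients of `p`. -/
theorem stmt_11 (p q : Polynomial ℝ) (y₀ : ℝ)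
    (h : p = (Polynomial.X - Polynomial.C y₀) * q) :
    ∀ k : ℕ, |q.coeff k| ≤ ∑ j ∈ p.support, |p.coeff j| := by
  have hrec : ∀ n : ℕ, p.coeff (n + 1) = q.coeff n - y₀ * q.coeff (n + 1) := by
    intro n
    rw [h]
    simp [sub_mul, Polynomial.coeff_X_mul]
  have h0 : p.coeff 0 = -(y₀ * q.coeff 0) := by
    rw [h]
    simp [sub_mul, Polynomial.coeff_mul, Finset.Nat.antidiagonal_zero]
  intro k
  rcases le_total |y₀| 1 with hy | hy
  · -- |y₀| ≤ 1 : downward induction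
    have key : ∀ m k : ℕ, q.natDegree < k + m →
        |q.coeff k| ≤ ∑ j ∈ Finset.Ico (k + 1) (k + m + 1), |p.coeff j| := by
      intro m
      induction m with
      | zero =>
        intro k hk
        simp only [Nat.add_zero] at hk
        rw [Polynomial.coeff_eq_zero_of_natDegree_lt hk]
        simp
      | succ m ih =>
        intro k hk
        have hq : q.coeff k = p.coeff (k + 1) + y₀ * q.coeff (k + 1) := by
          rw [hrec k]; ring
        have h1 : |q.coeff k| ≤ |p.coeff (k + 1)| + |y₀ * q.coeff (k + 1)| := by
          rw [hq]; exact abs_add_le _ _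
        have h2 : |y₀ * q.coeff (k + 1)| ≤ |q.coeff (k + 1)| := by
          rw [abs_mul]
          calc |y₀| * |q.coeff (k+1)| ≤ 1 * |q.coeff (k+1)| := by
                exact mul_le_mul_of_nonneg_right hy (abs_nonneg _)
            _ = |q.coeff (k+1)| := one_mul _
        have h3 := ih (k + 1) (by omega)
        have hins : Finset.Ico (k + 1) (k + (m + 1) + 1)
            = insert (k + 1) (Finset.Ico (k + 1 + 1) (k + 1 + m + 1)) := by
          ext j
          simp only [Finset.mem_Ico, Finset.mem_insert]
          omega
        rw [hins, Finset.sum_insert (by simp)]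
        linarith
    calc |q.coeff k| ≤ ∑ j ∈ Finset.Ico (k + 1) (k + (q.natDegree + 1) + 1), |p.coeff j| :=
          key (q.natDegree + 1) k (by omega)
      _ ≤ ∑ j ∈ p.support, |p.coeff j| := sum_abs_coeff_le p _
  · -- |y₀| ≥ 1 : upward induction
    have key : ∀ k : ℕ, |q.coeff k| ≤ ∑ j ∈ Finset.range (k + 1), |p.coeff j| := by
      intro k
      induction k with
      | zero =>
        have : |q.coeff 0| ≤ |y₀ * q.coeff 0| := by
          rw [abs_mul]
          nlinarith [abs_nonneg (q.coeff 0)]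
        calc |q.coeff 0| ≤ |y₀ * q.coeff 0| := this
          _ = |p.coeff 0| := by rw [h0, abs_neg]
          _ ≤ ∑ j ∈ Finset.range (0 + 1), |p.coeff j| := by simp
      | succ k ih =>
        have hq : y₀ * q.coeff (k + 1) = q.coeff k - p.coeff (k + 1) := by
          rw [hrec k]; ring
        have h1 : |q.coeff (k + 1)| ≤ |y₀ * q.coeff (k + 1)| := by
          rw [abs_mul]
          nlinarith [abs_nonneg (q.coeff (k + 1))]
        have h2 : |q.coeff k - p.coeff (k + 1)| ≤ |q.coeff k| + |p.coeff (k + 1)| :=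
          abs_sub _ _
        rw [Finset.sum_range_succ]
        rw [hq] at h1
        linarith
    exact (key k).trans (sum_abs_coeff_le p _)
end

section
/- There exists a constant K > 0 such that for every s ∈ ℕ and every root y₀ of He_{s+1}, the Lagrange basis polynomial L_{s;y₀} satisfies Σ_{ℓ=0}^{s} |coeff_ℓ(L_{s;y₀})| ≤ e^{K s} · s!. -/
/-- The Lagrange basis polynomial associated with the root `y₀` of the
probabilist Hermite polynomial `He_{s+1}`:
`L_{s;y₀} = ∏_{y' root of He_{s+1}, y' ≠ y₀} (X - y')/(y₀ - y')`. -/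
noncomputable def lagrangeHermitePoly (s : ℕ) (y₀ : ℝ) : Polynomial ℝ :=
  ∏ y' ∈ ((((Polynomial.hermite (s + 1)).map (Int.castRingHom ℝ)).roots).toFinset).erase y₀,
    Polynomial.C (y₀ - y')⁻¹ * (Polynomial.X - Polynomial.C y')

/-!
Writing `F` for the roots of `He_{s+1}`, `L_{s;y₀} = He_{s+1}'(y₀)⁻¹ · ∏_{y ∈ F, y ≠ y₀} (X - y)`
once `He_{s+1}` is known to have `s + 1` distinct real roots. This follows by induction from
Rolle's theorem applied to `He_n(x) e^{-x²/2}`, whose derivative is `-He_{n+1}(x) e^{-x²/2}` and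
which vanishes at `±∞`: one critical point to the left of each root of `He_n`, one to the right
of the largest.

The absolute coefficients of `∏ (X - y)` sum to at most `∏ (1 + |y|) ≤ (4s)^s ≤ e^{3s} s!`,
since every root satisfies `y² ≤ 4(s + 1)`. The weight is at most one in absolute value: the
Wronskian `W_n = He_n He_{n+1}' - He_n' He_{n+1}` satisfies `W_{n+1} = (n + 1) W_n + He_{n+1}²`,
so `W_n ≥ n!`, and at a root `y₀` of `He_{s+1}` this reads `He_{s+1}'(y₀)² ≥ (s + 1)!`.
-/

open Polynomial Filter Topology Finset
open scoped Nat

section Rolle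

variable {f : ℝ → ℝ}

lemma exists_gt_deriv_eq_zero_of_tendsto_atTop (hf : Differentiable ℝ f) (a : ℝ)
    (hlim : Tendsto f atTop (𝓝 (f a))) : ∃ c > a, deriv f c = 0 := by
  -- reparametrize `(a, ∞)` by `t ↦ a - log t` on `(0, 1)` and apply Rolle there
  set u : ℝ → ℝ := fun t => a - Real.log t
  have hu0 : Tendsto u (𝓝[>] 0) atTop :=
    tendsto_atTop_add_const_left _ _ (tendsto_neg_atBot_atTop.comp Real.tendsto_log_nhdsGT_zero)
  have hu1 : Tendsto u (𝓝[<] 1) (𝓝 a) := by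
    have : ContinuousAt u 1 := continuousAt_const.sub (Real.continuousAt_log one_ne_zero)
    simpa [u] using this.tendsto.mono_left nhdsWithin_le_nhds
  obtain ⟨t, ⟨ht0, ht1⟩, hd⟩ := exists_hasDerivAt_eq_zero' zero_lt_one (hlim.comp hu0)
    ((hf a).continuousAt.tendsto.comp hu1)
    (fun t ht => ((hf (u t)).hasDerivAt.comp t ((Real.hasDerivAt_log ht.1.ne').const_sub a)))
  refine ⟨u t, ?_, ?_⟩
  · linarith [Real.log_neg ht0 ht1]
  · simpa [ht0.ne'] using hd

lemma exists_lt_deriv_eq_zero_of_tendsto_atBot (hf : Differentiable ℝ f) (a : ℝ)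
    (hlim : Tendsto f atBot (𝓝 (f a))) : ∃ c < a, deriv f c = 0 := by
  obtain ⟨c, hc, hd⟩ := exists_gt_deriv_eq_zero_of_tendsto_atTop (hf.comp differentiable_neg) (-a)
    (by simpa using hlim.comp tendsto_neg_atTop_atBot)
  rw [Function.comp_def, deriv_comp_neg, neg_eq_zero] at hd
  exact ⟨-c, by linarith, hd⟩

lemma exists_finset_deriv_eq_zero_card_eq_of_tendsto_atBot (hf : Differentiable ℝ f)
    (hbot : Tendsto f atBot (𝓝 0)) (Z : Finset ℝ) (hZ : ∀ z ∈ Z, f z = 0) :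
    ∃ W : Finset ℝ, W.card = Z.card ∧ (∀ w ∈ W, deriv f w = 0) ∧ ∀ w ∈ W, ∃ z ∈ Z, w < z := by
  induction Z using Finset.induction_on_max with
  | empty => exact ⟨∅, by simp⟩
  | insert m Z hlt ih =>
    have hm : f m = 0 := hZ m (mem_insert_self m Z)
    obtain ⟨W, hcard, hW, hWZ⟩ := ih fun z hz => hZ z (mem_insert_of_mem hz)
    obtain ⟨c, hc, hcm, hdc⟩ : ∃ c, (∀ z ∈ Z, z < c) ∧ c < m ∧ deriv f c = 0 := by
      rcases Z.eq_empty_or_nonempty with rfl | hne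
      · obtain ⟨c, hcm, hdc⟩ := exists_lt_deriv_eq_zero_of_tendsto_atBot hf m (hm ▸ hbot)
        exact ⟨c, by simp, hcm, hdc⟩
      · have hmax := Z.max'_mem hne
        obtain ⟨c, ⟨hc₁, hc₂⟩, hdc⟩ := exists_deriv_eq_zero (hlt _ hmax) hf.continuous.continuousOn
          (by rw [hm, hZ _ (mem_insert_of_mem hmax)])
        exact ⟨c, fun z hz => (Z.le_max' z hz).trans_lt hc₁, hc₂, hdc⟩
    have hcW : c ∉ W := fun hcW => by
      obtain ⟨z, hz, hcz⟩ := hWZ c hcW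
      exact (hc z hz).not_gt hcz
    refine ⟨insert c W, ?_, ?_, ?_⟩
    · rw [card_insert_of_notMem hcW, card_insert_of_notMem, hcard]
      exact fun hmZ => (hlt m hmZ).false
    · simpa [hdc] using hW
    · simp only [forall_mem_insert, exists_mem_insert]
      exact ⟨Or.inl hcm, fun w hw => Or.inr (hWZ w hw)⟩

lemma exists_finset_deriv_eq_zero_card_gt (hf : Differentiable ℝ f)
    (hbot : Tendsto f atBot (𝓝 0)) (htop : Tendsto f atTop (𝓝 0)) {Z : Finset ℝ}
    (hne : Z.Nonempty) (hZ : ∀ z ∈ Z, f z = 0) :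
    ∃ W : Finset ℝ, Z.card < W.card ∧ ∀ w ∈ W, deriv f w = 0 := by
  obtain ⟨W, hcard, hW, hWZ⟩ := exists_finset_deriv_eq_zero_card_eq_of_tendsto_atBot hf hbot Z hZ
  have hmax := Z.max'_mem hne
  obtain ⟨c, hc, hdc⟩ :=
    exists_gt_deriv_eq_zero_of_tendsto_atTop hf (Z.max' hne) (hZ _ hmax ▸ htop)
  have hcW : c ∉ W := fun hcW => by
    obtain ⟨z, hz, hcz⟩ := hWZ c hcW
    exact (Z.le_max' z hz).not_gt (hc.trans hcz)
  refine ⟨insert c W, by rw [card_insert_of_notMem hcW, hcard]; omega, ?_⟩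
  simpa [hdc] using hW

end Rolle

lemma tendsto_eval_mul_exp_neg_sq_div_two_atTop (p : ℝ[X]) :
    Tendsto (fun x => p.eval x * Real.exp (-(x ^ 2 / 2))) atTop (𝓝 0) := by
  -- `exp (-x²/2) ≤ exp (-x)` for `x ≥ 2`
  refine squeeze_zero_norm' ?_ (by simpa using p.tendsto_div_exp_atTop.abs)
  filter_upwards [eventually_ge_atTop 2] with x hx
  rw [norm_mul, Real.norm_eq_abs, Real.norm_of_nonneg (Real.exp_pos _).le, abs_div,
    abs_of_pos (Real.exp_pos x), div_eq_mul_inv _ (Real.exp x), ← Real.exp_neg]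
  gcongr
  nlinarith

lemma tendsto_eval_mul_exp_neg_sq_div_two_atBot (p : ℝ[X]) :
    Tendsto (fun x => p.eval x * Real.exp (-(x ^ 2 / 2))) atBot (𝓝 0) := by
  have := (tendsto_eval_mul_exp_neg_sq_div_two_atTop (p.comp (-X))).comp tendsto_neg_atBot_atTop
  simpa [Function.comp_def] using this

noncomputable def He (n : ℕ) : ℝ[X] := (hermite n).map (Int.castRingHom ℝ)

lemma He_monic (n : ℕ) : (He n).Monic := (hermite_monic n).map _

lemma natDegree_He (n : ℕ) : (He n).natDegree = n := by
  rw [He, (hermite_monic n).natDegree_map, natDegree_hermite]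

@[simp] lemma He_zero : He 0 = 1 := by simp [He]

@[simp] lemma He_one : He 1 = X := by simp [He]

lemma He_succ (n : ℕ) : He (n + 1) = X * He n - derivative (He n) := by
  simp [He, hermite_succ, derivative_map]

lemma derivative_He_succ (n : ℕ) : derivative (He (n + 1)) = C ((n : ℝ) + 1) * He n := by
  induction n with
  | zero => simp
  | succ n ih =>
    rw [He_succ (n + 1), derivative_sub, derivative_mul, ih, He_succ n]
    simp only [derivative_X, derivative_mul, derivative_C, derivative_one, Nat.cast_succ, map_add,
      map_one]
    ring

lemma He_succ_succ (n : ℕ) : He (n + 2) = X * He (n + 1) - C ((n : ℝ) + 1) * He n := by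
  rw [He_succ (n + 1), derivative_He_succ]

lemma eval_neg_He (n : ℕ) (x : ℝ) : (He n).eval (-x) = (-1) ^ n * (He n).eval x := by
  induction n using Nat.twoStepInduction with
  | zero => simp
  | one => simp
  | more n ih₀ ih₁ =>
    simp only [He_succ_succ, eval_sub, eval_mul, eval_X, eval_C, ih₀, ih₁]
    ring

lemma wronskian_He_succ (n : ℕ) :
    wronskian (He (n + 1)) (He (n + 2)) =
      C ((n : ℝ) + 1) * wronskian (He n) (He (n + 1)) + He (n + 1) ^ 2 := by
  have hd : derivative (He n) = X * He n - He (n + 1) := by rw [He_succ]; ring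
  rw [wronskian, wronskian, derivative_He_succ (n + 1), derivative_He_succ n, hd, He_succ_succ]
  simp only [Nat.cast_succ, map_add, map_one]
  ring

lemma factorial_le_eval_wronskian_He (n : ℕ) (x : ℝ) :
    (n ! : ℝ) ≤ (wronskian (He n) (He (n + 1))).eval x := by
  induction n with
  | zero => simp [wronskian]
  | succ n ih =>
    rw [wronskian_He_succ, Nat.factorial_succ]
    simp only [eval_add, eval_mul, eval_C, eval_pow]
    push_cast
    nlinarith [sq_nonneg ((He (n + 1)).eval x)]

lemma factorial_le_sq_eval_derivative_He {n : ℕ} {x : ℝ} (hx : (He (n + 1)).IsRoot x) :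
    ((n + 1)! : ℝ) ≤ ((derivative (He (n + 1))).eval x) ^ 2 := by
  have h := factorial_le_eval_wronskian_He n x
  simp only [wronskian, eval_sub, eval_mul, hx.eq_zero, mul_zero, sub_zero,
    derivative_He_succ, eval_C] at h ⊢
  rw [Nat.factorial_succ]
  push_cast
  nlinarith

lemma eval_He_pos_and_le (n : ℕ) {y : ℝ} (hy : 0 ≤ y) (hny : 4 * n ≤ y ^ 2) :
    0 < (He n).eval y ∧ y * (He n).eval y ≤ 2 * (He (n + 1)).eval y := by
  induction n with
  | zero =>
    simp only [zero_add, He_zero, He_one, eval_one, eval_X, mul_one]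
    exact ⟨one_pos, by linarith⟩
  | succ n ih =>
    push_cast at hny
    obtain ⟨hpos, hle⟩ := ih (by linarith)
    have hy2 : 2 ≤ y := by nlinarith
    have hpos' : 0 < (He (n + 1)).eval y := by nlinarith
    refine ⟨hpos', ?_⟩
    simp only [He_succ_succ, eval_sub, eval_mul, eval_X, eval_C]
    nlinarith

lemma sq_le_of_isRoot_He {n : ℕ} {x : ℝ} (hx : (He n).IsRoot x) : x ^ 2 ≤ 4 * n := by
  by_contra! h
  rcases le_total 0 x with hx0 | hx0
  · exact (eval_He_pos_and_le n hx0 h.le).1.ne' hx.eq_zero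
  · have := (eval_He_pos_and_le n (neg_nonneg.2 hx0) (by rw [neg_sq]; exact h.le)).1
    rw [eval_neg_He, hx.eq_zero, mul_zero] at this
    exact this.false

noncomputable def hermiteFun (n : ℕ) (x : ℝ) : ℝ := (He n).eval x * Real.exp (-(x ^ 2 / 2))

lemma hasDerivAt_hermiteFun (n : ℕ) (x : ℝ) :
    HasDerivAt (hermiteFun n) (-((He (n + 1)).eval x * Real.exp (-(x ^ 2 / 2)))) x := by
  have hw : HasDerivAt (fun y : ℝ => Real.exp (-(y ^ 2 / 2))) (Real.exp (-(x ^ 2 / 2)) * -x) x := by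
    simpa using ((hasDerivAt_pow 2 x).div_const 2).neg.exp
  refine (((He n).hasDerivAt x).mul hw).congr_deriv ?_
  rw [He_succ]
  simp only [eval_sub, eval_mul, eval_X]
  ring

lemma isRoot_He_succ_of_deriv_hermiteFun_eq_zero {n : ℕ} {x : ℝ}
    (h : deriv (hermiteFun n) x = 0) : (He (n + 1)).IsRoot x := by
  rw [(hasDerivAt_hermiteFun n x).deriv, neg_eq_zero, mul_eq_zero] at h
  exact h.resolve_right (Real.exp_ne_zero _)

lemma le_card_roots_toFinset_He (n : ℕ) : n ≤ (He n).roots.toFinset.card := by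
  induction n with
  | zero => simp
  | succ n ih =>
    rcases n.eq_zero_or_pos with rfl | hn
    · simp
    obtain ⟨W, hW, hdW⟩ := exists_finset_deriv_eq_zero_card_gt
      (fun x => (hasDerivAt_hermiteFun n x).differentiableAt)
      (tendsto_eval_mul_exp_neg_sq_div_two_atBot _) (tendsto_eval_mul_exp_neg_sq_div_two_atTop _)
      (Z := (He n).roots.toFinset) (card_pos.1 (by omega))
      (fun z hz => by simp [hermiteFun, (isRoot_of_mem_roots (Multiset.mem_toFinset.1 hz)).eq_zero])
    have hWsub : W ⊆ (He (n + 1)).roots.toFinset := fun w hw => by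
      simpa [(He_monic _).ne_zero] using isRoot_He_succ_of_deriv_hermiteFun_eq_zero (hdW w hw)
    exact (card_le_card hWsub).trans' (by omega)

lemma card_roots_toFinset_He (n : ℕ) : (He n).roots.toFinset.card = n :=
  le_antisymm ((Multiset.toFinset_card_le _).trans ((card_roots' _).trans_eq (natDegree_He n)))
    (le_card_roots_toFinset_He n)

lemma card_roots_toFinset_He_erase {n : ℕ} {y : ℝ} (hy : y ∈ (He (n + 1)).roots.toFinset) :
    ((He (n + 1)).roots.toFinset.erase y).card = n := by
  rw [card_erase_of_mem hy, card_roots_toFinset_He]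
  rfl

lemma He_eq_nodal (n : ℕ) : He n = Lagrange.nodal (He n).roots.toFinset id := by
  have hcard : Multiset.card (He n).roots = n :=
    le_antisymm ((card_roots' _).trans_eq (natDegree_He n))
      ((card_roots_toFinset_He n).symm.trans_le (Multiset.toFinset_card_le _))
  have hnodup : (He n).roots.Nodup := Multiset.toFinset_card_eq_card_iff_nodup.1
    ((card_roots_toFinset_He n).trans hcard.symm)
  rw [Lagrange.nodal_eq, prod_eq_multiset_prod, Multiset.toFinset_val, hnodup.dedup]
  simpa using (prod_multiset_X_sub_C_of_monic_of_roots_card_eq (He_monic n)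
    (by rw [natDegree_He, hcard])).symm

lemma sum_abs_coeff_X_sub_C_mul_le (a : ℝ) {p : ℝ[X]} {n : ℕ} (hp : p.natDegree < n) :
    ∑ ℓ ∈ range (n + 1), |((X - C a) * p).coeff ℓ| ≤ (1 + |a|) * ∑ ℓ ∈ range n, |p.coeff ℓ| := by
  calc ∑ ℓ ∈ range (n + 1), |((X - C a) * p).coeff ℓ|
      ≤ ∑ ℓ ∈ range (n + 1), (|(X * p).coeff ℓ| + |a| * |p.coeff ℓ|) := by
        gcongr with ℓ
        rw [sub_mul, coeff_sub, coeff_C_mul, ← abs_mul]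
        exact abs_sub _ _
    _ = (1 + |a|) * ∑ ℓ ∈ range n, |p.coeff ℓ| := by
        rw [sum_add_distrib, ← mul_sum, sum_range_succ', sum_range_succ _ n]
        simp [coeff_X_mul, coeff_eq_zero_of_natDegree_lt hp]
        ring

lemma sum_abs_coeff_nodal_le {ι : Type*} (s : Finset ι) (v : ι → ℝ) :
    ∑ ℓ ∈ range (s.card + 1), |(Lagrange.nodal s v).coeff ℓ| ≤ ∏ i ∈ s, (1 + |v i|) := by
  classical
  induction s using Finset.induction_on with
  | empty => simp [Lagrange.nodal_empty]
  | insert i s hi ih =>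
    rw [Lagrange.nodal_insert_eq_nodal hi, card_insert_of_notMem hi, prod_insert hi]
    refine (sum_abs_coeff_X_sub_C_mul_le _ ?_).trans (by gcongr)
    rw [Lagrange.natDegree_nodal]
    omega

lemma lagrangeHermitePoly_eq {s : ℕ} {y₀ : ℝ} (hy₀ : y₀ ∈ (He (s + 1)).roots.toFinset) :
    lagrangeHermitePoly s y₀ = C ((derivative (He (s + 1))).eval y₀)⁻¹ *
      Lagrange.nodal ((He (s + 1)).roots.toFinset.erase y₀) id := by
  have h := Lagrange.basis_eq_prod_sub_inv_mul_nodal_div (v := id) hy₀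
  rwa [← Lagrange.nodal_erase_eq_nodal_div hy₀, Lagrange.nodalWeight_eq_eval_derivative_nodal hy₀,
    ← He_eq_nodal] at h

lemma sum_abs_coeff_lagrangeHermitePoly_le {s : ℕ} {y₀ : ℝ}
    (hy₀ : y₀ ∈ (He (s + 1)).roots.toFinset) :
    ∑ ℓ ∈ range (s + 1), |(lagrangeHermitePoly s y₀).coeff ℓ| ≤
      ∏ y ∈ (He (s + 1)).roots.toFinset.erase y₀, (1 + |y|) := by
  have hweight : |(derivative (He (s + 1))).eval y₀|⁻¹ ≤ 1 := by
    refine inv_le_one_of_one_le₀ (one_le_sq_iff_one_le_abs _ |>.1 ?_)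
    refine le_trans ?_ (factorial_le_sq_eval_derivative_He
      (isRoot_of_mem_roots (Multiset.mem_toFinset.1 hy₀)))
    exact_mod_cast (s + 1).factorial_pos
  rw [lagrangeHermitePoly_eq hy₀]
  simp only [coeff_C_mul, abs_mul, abs_inv, ← mul_sum]
  refine (mul_le_of_le_one_left (by positivity) hweight).trans ?_
  have h := sum_abs_coeff_nodal_le ((He (s + 1)).roots.toFinset.erase y₀) id
  rwa [card_roots_toFinset_He_erase hy₀] at h

lemma four_mul_pow_le_exp_mul_factorial (n : ℕ) : (4 * n : ℝ) ^ n ≤ Real.exp (3 * n) * n ! := by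
  have h4 : (4 : ℝ) ≤ Real.exp 2 := by
    have := Real.add_one_le_exp 1
    rw [show (2 : ℝ) = 1 + 1 by norm_num, Real.exp_add]
    nlinarith
  have hn : (n : ℝ) ^ n ≤ Real.exp n * n ! := by
    have := Real.pow_div_factorial_le_exp _ n.cast_nonneg n
    rwa [div_le_iff₀ (by positivity)] at this
  calc (4 * n : ℝ) ^ n = 4 ^ n * n ^ n := mul_pow _ _ _
    _ ≤ Real.exp 2 ^ n * (Real.exp n * n !) := by gcongr
    _ = Real.exp (3 * n) * n ! := by
        rw [← Real.exp_nat_mul, ← mul_assoc, ← Real.exp_add]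
        ring_nf

/-- Lemma A.6: there is `K > 0` such that for every `s ≥ 1` and
every root `y₀` of `He_{s+1}`, the coefficients of the Lagrange basis
polynomial `L_{s;y₀}` satisfy `∑_{ℓ=0}^{s} |coeff_ℓ(L_{s;y₀})| ≤ e^{Ks} · s!`. -/
theorem stmt_13 :
    ∃ K > (0 : ℝ), ∀ s : ℕ, 1 ≤ s →
      ∀ y₀ ∈ (((Polynomial.hermite (s + 1)).map (Int.castRingHom ℝ)).roots).toFinset,
        ∑ ℓ ∈ Finset.range (s + 1), |(lagrangeHermitePoly s y₀).coeff ℓ| ≤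
          Real.exp (K * s) * (s.factorial) := by
  refine ⟨3, by norm_num, fun s hs y₀ hy₀ => ?_⟩
  have hroot : ∀ y ∈ (He (s + 1)).roots.toFinset.erase y₀, 1 + |y| ≤ 4 * s := fun y hy => by
    have := sq_le_of_isRoot_He (isRoot_of_mem_roots (Multiset.mem_toFinset.1 (mem_of_mem_erase hy)))
    have hs' : (1 : ℝ) ≤ s := by exact_mod_cast hs
    push_cast at this
    nlinarith [sq_abs y, abs_nonneg y]
  calc _ ≤ ∏ y ∈ (He (s + 1)).roots.toFinset.erase y₀, (1 + |y|) :=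
        sum_abs_coeff_lagrangeHermitePoly_le hy₀
    _ ≤ ∏ _y ∈ (He (s + 1)).roots.toFinset.erase y₀, (4 * s : ℝ) :=
        prod_le_prod (fun _ _ => by positivity) hroot
    _ = (4 * s : ℝ) ^ s := by
        rw [prod_const, card_roots_toFinset_He_erase hy₀]
    _ ≤ _ := four_mul_pow_le_exp_mul_factorial s
end

section
/- There exists a constant K > 0 such that for every s ∈ ℕ with s ≥ 1, (2π)^{1/4} · Σ_{y : He_{s+1}(y) = 0} e^{y²/4} ≤ e^{K s}, where the sum runs over the s+1 distinct real roots y of He_{s+1}. -/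
open Polynomial in
lemma deriv_hermite (n : ℕ) :
    derivative (hermite (n + 1)) = C ((n : ℤ) + 1) * hermite n := by
  induction n with
  | zero => simp [hermite_one, hermite_zero]
  | succ n ih =>
    rw [hermite_succ (n + 1), derivative_sub, derivative_mul, derivative_X, one_mul, ih,
      derivative_mul, derivative_C, zero_mul, zero_add, hermite_succ n]
    push_cast
    simp only [map_add, map_one, map_ofNat]
    ring

/-- Abstract positivity lemma for a Hermite-type three-term recurrence far out. -/
lemma seq_pos (n : ℕ) (x : ℝ) (hx : 2 * Real.sqrt n ≤ x) (f : ℕ → ℝ)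
    (h0 : f 0 = 1) (h1 : f 1 = x)
    (hrec : ∀ k : ℕ, f (k + 2) = x * f (k + 1) - ((k : ℝ) + 1) * f k) :
    ∀ k, k ≤ n → 0 < f k ∧ Real.sqrt n * f k ≤ f (k + 1) := by
  intro k
  induction k with
  | zero =>
    intro _
    refine ⟨by rw [h0]; norm_num, ?_⟩
    rw [h0, h1, mul_one]
    nlinarith [Real.sqrt_nonneg (n : ℝ)]
  | succ k ih =>
    intro hk
    obtain ⟨hfk, hrat⟩ := ih (Nat.le_of_succ_le hk)
    have hn1 : 1 ≤ n := le_trans (Nat.one_le_iff_ne_zero.mpr (by omega)) hk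
    have hsq : 1 ≤ Real.sqrt n := by
      rw [show (1 : ℝ) = Real.sqrt 1 by simp]
      exact Real.sqrt_le_sqrt (by exact_mod_cast hn1)
    have hfk1 : 0 < f (k + 1) := lt_of_lt_of_le (by positivity) hrat
    refine ⟨hfk1, ?_⟩
    rw [hrec k]
    have hmul : Real.sqrt n * Real.sqrt n = (n : ℝ) := Real.mul_self_sqrt (by positivity)
    have hk1n : ((k : ℝ) + 1) ≤ (n : ℝ) := by exact_mod_cast hk
    have h1' : ((k : ℝ) + 1) * f k ≤ Real.sqrt n * f (k + 1) := by
      calc ((k : ℝ) + 1) * f k ≤ (n : ℝ) * f k := by nlinarith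
        _ = Real.sqrt n * (Real.sqrt n * f k) := by rw [← mul_assoc, hmul]
        _ ≤ Real.sqrt n * f (k + 1) := by nlinarith
    nlinarith [hfk1.le]

open Polynomial in
/-- Any real root of `He_{s+1}` satisfies `y² ≤ 4(s+1)`. -/
lemma hermite_root_sq_le (s : ℕ) (y : ℝ)
    (hy : eval y ((hermite (s + 1)).map (Int.castRingHom ℝ)) = 0) :
    y ^ 2 ≤ 4 * ((s : ℝ) + 1) := by
  set f : ℕ → ℝ := fun k => eval y ((hermite k).map (Int.castRingHom ℝ)) with hf
  have h0 : f 0 = 1 := by simp [hf, hermite_zero]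
  have h1 : f 1 = y := by simp [hf, hermite_one]
  have hrec : ∀ k : ℕ, f (k + 2) = y * f (k + 1) - ((k : ℝ) + 1) * f k := by
    intro k
    have : hermite (k + 2) = X * hermite (k + 1) - C ((k : ℤ) + 1) * hermite k := by
      rw [hermite_succ (k + 1), deriv_hermite k]
    simp only [hf, this, Polynomial.map_sub, Polynomial.map_mul, Polynomial.map_C,
      Polynomial.map_X, Polynomial.eval_sub, Polynomial.eval_mul, Polynomial.eval_C,
      Polynomial.eval_X, eq_intCast, Polynomial.map_intCast, Polynomial.eval_intCast]
    push_cast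
    ring
  by_contra h
  push_neg at h
  have hyabs : 2 * Real.sqrt ((s : ℝ) + 1) ≤ |y| := by
    nlinarith [Real.sq_sqrt (show (0 : ℝ) ≤ (s : ℝ) + 1 by positivity),
      Real.sqrt_nonneg ((s : ℝ) + 1), abs_nonneg y, sq_abs y]
  have hcast : ((s + 1 : ℕ) : ℝ) = (s : ℝ) + 1 := by push_cast; ring
  rcases le_or_gt 0 y with hy0 | hy0
  · rw [abs_of_nonneg hy0] at hyabs
    have := (seq_pos (s + 1) y (by rw [hcast]; exact hyabs) f h0 h1 hrec (s + 1) le_rfl).1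
    rw [show f (s + 1) = 0 from hy] at this
    exact lt_irrefl 0 this
  · rw [abs_of_neg hy0] at hyabs
    set g : ℕ → ℝ := fun k => (-1) ^ k * f k with hg
    have hg0 : g 0 = 1 := by simp [hg, h0]
    have hg1 : g 1 = -y := by simp [hg, h1]
    have hgrec : ∀ k : ℕ, g (k + 2) = (-y) * g (k + 1) - ((k : ℝ) + 1) * g k := by
      intro k
      simp only [hg, hrec k]
      ring
    have := (seq_pos (s + 1) (-y) (by rw [hcast]; exact hyabs) g hg0 hg1 hgrec (s + 1) le_rfl).1
    have hz : g (s + 1) = 0 := by simp [hg, show f (s + 1) = 0 from hy]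
    rw [hz] at this
    exact lt_irrefl 0 this

/-- key univariate estimate in the proof of Lemma A.3: there is
`K > 0` such that for every `s ≥ 1`,
`(2π)^{1/4} ∑_{y : He_{s+1}(y)=0} e^{y²/4} ≤ e^{Ks}`, the sum running over the
distinct real roots of the probabilist Hermite polynomial `He_{s+1}`. -/
theorem stmt_17 :
    ∃ K > (0 : ℝ), ∀ s : ℕ, 1 ≤ s →
      (2 * Real.pi) ^ ((1 : ℝ) / 4) *
          ∑ y ∈ (((Polynomial.hermite (s + 1)).map (Int.castRingHom ℝ)).roots).toFinset,
            Real.exp (y ^ 2 / 4) ≤ Real.exp (K * s) := by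
  refine ⟨6, by norm_num, fun s hs => ?_⟩
  set P := (Polynomial.hermite (s + 1)).map (Int.castRingHom ℝ) with hP
  have hPmonic : P.Monic := (Polynomial.hermite_monic (s + 1)).map _
  have hdeg : P.natDegree = s + 1 := by
    rw [hP, (Polynomial.hermite_monic (s + 1)).natDegree_map, Polynomial.natDegree_hermite]
  have hcard : P.roots.toFinset.card ≤ s + 1 := by
    calc P.roots.toFinset.card ≤ Multiset.card P.roots := P.roots.toFinset_card_le
      _ ≤ P.natDegree := P.card_roots'
      _ = s + 1 := hdeg
  have hterm : ∀ y ∈ P.roots.toFinset, Real.exp (y ^ 2 / 4) ≤ Real.exp ((s : ℝ) + 1) := by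
    intro y hy
    rw [Multiset.mem_toFinset, Polynomial.mem_roots hPmonic.ne_zero] at hy
    have := hermite_root_sq_le s y hy
    exact Real.exp_le_exp.mpr (by linarith)
  have hsum : ∑ y ∈ P.roots.toFinset, Real.exp (y ^ 2 / 4)
      ≤ ((s : ℝ) + 1) * Real.exp ((s : ℝ) + 1) := by
    calc ∑ y ∈ P.roots.toFinset, Real.exp (y ^ 2 / 4)
        ≤ ∑ _y ∈ P.roots.toFinset, Real.exp ((s : ℝ) + 1) := Finset.sum_le_sum hterm
      _ = (P.roots.toFinset.card : ℝ) * Real.exp ((s : ℝ) + 1) := by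
          rw [Finset.sum_const, nsmul_eq_mul]
      _ ≤ ((s : ℝ) + 1) * Real.exp ((s : ℝ) + 1) := by
          have : (P.roots.toFinset.card : ℝ) ≤ (s : ℝ) + 1 := by exact_mod_cast hcard
          nlinarith [Real.exp_pos ((s : ℝ) + 1)]
  have hpow : (2 * Real.pi) ^ ((1 : ℝ) / 4) ≤ 8 := by
    have h1 : (1 : ℝ) ≤ 2 * Real.pi := by nlinarith [Real.pi_gt_three]
    calc (2 * Real.pi) ^ ((1 : ℝ) / 4) ≤ (2 * Real.pi) ^ (1 : ℝ) :=
          Real.rpow_le_rpow_of_exponent_le h1 (by norm_num)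
      _ = 2 * Real.pi := Real.rpow_one _
      _ ≤ 8 := by nlinarith [Real.pi_le_four]
  have hsumnn : 0 ≤ ∑ y ∈ P.roots.toFinset, Real.exp (y ^ 2 / 4) :=
    Finset.sum_nonneg fun y _ => (Real.exp_pos _).le
  have h8 : (8 : ℝ) ≤ Real.exp 3 := by
    have he : Real.exp 3 = Real.exp 1 * Real.exp 1 * Real.exp 1 := by
      rw [← Real.exp_add, ← Real.exp_add]; norm_num
    nlinarith [Real.add_one_le_exp (1 : ℝ), Real.exp_pos (1 : ℝ)]
  have hsle : ((s : ℝ) + 1) ≤ Real.exp s := Real.add_one_le_exp _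
  have hs1 : (1 : ℝ) ≤ (s : ℝ) := by exact_mod_cast hs
  calc (2 * Real.pi) ^ ((1 : ℝ) / 4) * ∑ y ∈ P.roots.toFinset, Real.exp (y ^ 2 / 4)
      ≤ 8 * (((s : ℝ) + 1) * Real.exp ((s : ℝ) + 1)) := by
        apply mul_le_mul hpow hsum hsumnn (by norm_num)
    _ ≤ Real.exp 3 * (Real.exp s * Real.exp ((s : ℝ) + 1)) := by
        gcongr
    _ = Real.exp (3 + ((s : ℝ) + ((s : ℝ) + 1))) := by
        rw [← Real.exp_add, ← Real.exp_add]
    _ ≤ Real.exp (6 * s) := Real.exp_le_exp.mpr (by linarith)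
end
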